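/- arXiv:2507.23249 — 5 statements merged into one kernel-verified Lean document; each statement's English description precedes it below -/
import Mathlib

section
/- Let (F,G) be a dual frame pair for an n-dimensional Hilbert space H with N vectors each, and p > 1. Then (1/N · ∑_{i=1}^N |⟨f_i, g_i⟩|^p)^{1/p} ≥ n/N, with equality if and only if ⟨f_i, g_i⟩ = n/N for all i. -/
/-! Taking traces in the reconstruction formula `id = ∑ᵢ ⟪fᵢ, ·⟫ gᵢ` gives `∑ᵢ ⟪fᵢ, gᵢ⟫ = n`,
so the arithmetic mean of the `|⟪fᵢ, gᵢ⟫|` is at least `n / N`, and the power-mean inequality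
bounds their `p`-mean from below by it. Equality forces equality in Jensen's inequality for the
strictly convex `x ↦ x ^ p`, so all `|⟪fᵢ, gᵢ⟫| = n / N`, and in the triangle inequality
`|∑ᵢ ⟪fᵢ, gᵢ⟫| ≤ ∑ᵢ |⟪fᵢ, gᵢ⟫|`, which makes every `⟪fᵢ, gᵢ⟫` real and nonnegative. -/

open Finset

theorem sum_inner_eq_finrank_of_reconstruction {𝕜 E ι : Type*} [RCLike 𝕜] [NormedAddCommGroup E]
    [InnerProductSpace 𝕜 E] [FiniteDimensional 𝕜 E] [Fintype ι] {f g : ι → E}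
    (hfg : ∀ v : E, v = ∑ i, (inner 𝕜 (f i) v : 𝕜) • g i) :
    ∑ i, (inner 𝕜 (f i) (g i) : 𝕜) = Module.finrank 𝕜 E := by
  have hid : LinearMap.id = ∑ i, (innerₛₗ 𝕜 (f i)).smulRight (g i) := by
    ext v
    simpa using hfg v
  calc ∑ i, (inner 𝕜 (f i) (g i) : 𝕜)
      = LinearMap.trace 𝕜 E (∑ i, (innerₛₗ 𝕜 (f i)).smulRight (g i)) := by
        simp [map_sum, LinearMap.trace_smulRight]
    _ = Module.finrank 𝕜 E := by rw [← hid, LinearMap.trace_id]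

theorem RCLike.eq_norm_of_sum_eq_sum_norm {𝕜 ι : Type*} [RCLike 𝕜] {s : Finset ι} {w : ι → 𝕜}
    (h : ∑ i ∈ s, w i = ∑ i ∈ s, (‖w i‖ : 𝕜)) : ∀ i ∈ s, w i = ‖w i‖ := by
  have hre : ∑ i ∈ s, RCLike.re (w i) = ∑ i ∈ s, ‖w i‖ := by
    simpa [map_sum] using congrArg RCLike.re h
  intro i hi
  rw [← RCLike.norm_le_re_iff_eq_norm]
  exact ((Finset.sum_eq_sum_iff_of_le fun j _ => RCLike.re_le_norm (w j)).mp hre i hi).ge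

namespace Real

variable {ι : Type*} (s : Finset ι) {w z : ι → ℝ} {p : ℝ}

theorem arith_mean_eq_rpow_mean_iff (hw : ∀ i ∈ s, 0 < w i) (hw' : ∑ i ∈ s, w i = 1)
    (hz : ∀ i ∈ s, 0 ≤ z i) (hp : 1 < p) :
    ∑ i ∈ s, w i * z i = (∑ i ∈ s, w i * z i ^ p) ^ (1 / p) ↔
      ∀ j ∈ s, z j = ∑ i ∈ s, w i * z i := by
  have hmean : 0 ≤ ∑ i ∈ s, w i * z i :=
    sum_nonneg fun i hi => mul_nonneg (hw i hi).le (hz i hi)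
  have hpow : 0 ≤ ∑ i ∈ s, w i * z i ^ p :=
    sum_nonneg fun i hi => mul_nonneg (hw i hi).le (rpow_nonneg (hz i hi) p)
  rw [one_div, eq_rpow_inv hmean hpow (by linarith)]
  exact (strictConvexOn_rpow hp).map_sum_eq_iff hw hw' hz

theorem rpow_mean_eq_iff_of_le_arith_mean (hw : ∀ i ∈ s, 0 < w i) (hw' : ∑ i ∈ s, w i = 1)
    (hz : ∀ i ∈ s, 0 ≤ z i) (hp : 1 < p) {c : ℝ} (hc : c ≤ ∑ i ∈ s, w i * z i) :
    (∑ i ∈ s, w i * z i ^ p) ^ (1 / p) = c ↔ ∀ j ∈ s, z j = c := by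
  have hle := arith_mean_le_rpow_mean s w z (fun i hi => (hw i hi).le) hw' hz hp.le
  constructor
  · intro h
    have heq : ∑ i ∈ s, w i * z i = c := le_antisymm (h ▸ hle) hc
    rw [← heq]
    exact (arith_mean_eq_rpow_mean_iff s hw hw' hz hp).mp (heq.trans h.symm)
  · intro h
    have heq : ∑ i ∈ s, w i * z i = c := by
      rw [sum_congr rfl fun i hi => by rw [h i hi], ← sum_mul, hw', one_mul]
    rw [← heq]
    exact ((arith_mean_eq_rpow_mean_iff s hw hw' hz hp).mpr (heq ▸ h)).symm

end Real

theorem stmt7 (n N : ℕ) (hN : 0 < N) (H : Type*) [NormedAddCommGroup H]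
    [InnerProductSpace ℂ H] [FiniteDimensional ℂ H] (hn : Module.finrank ℂ H = n)
    (f g : Fin N → H)
    (hdual : ∀ v : H, v = ∑ i, (inner ℂ (f i) v : ℂ) • g i)
    (p : ℝ) (hp : 1 < p) :
    ((1 / N : ℝ) * ∑ i, ‖(inner ℂ (f i) (g i) : ℂ)‖ ^ p) ^ (1 / p) ≥ (n : ℝ) / N ∧
    (((1 / N : ℝ) * ∑ i, ‖(inner ℂ (f i) (g i) : ℂ)‖ ^ p) ^ (1 / p) = (n : ℝ) / N ↔
      ∀ i, (inner ℂ (f i) (g i) : ℂ) = ((n : ℝ) / N : ℝ)) := by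
  set c : ℝ := (n : ℝ) / N
  have htrace : ∑ i, (inner ℂ (f i) (g i) : ℂ) = n :=
    hn ▸ sum_inner_eq_finrank_of_reconstruction hdual
  have hw : ∀ i ∈ (univ : Finset (Fin N)), (0 : ℝ) < 1 / N := fun _ _ => by positivity
  have hw' : ∑ _i : Fin N, (1 / N : ℝ) = 1 := by simp [hN.ne']
  have hz : ∀ i ∈ (univ : Finset (Fin N)), 0 ≤ ‖(inner ℂ (f i) (g i) : ℂ)‖ :=
    fun _ _ => norm_nonneg _
  have hmean : c ≤ ∑ i, 1 / N * ‖(inner ℂ (f i) (g i) : ℂ)‖ :=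
    calc c = 1 / N * ‖∑ i, (inner ℂ (f i) (g i) : ℂ)‖ := by simp [htrace, c, div_eq_inv_mul]
      _ ≤ _ := by rw [← mul_sum]; gcongr; exact norm_sum_le _ _
  rw [mul_sum]
  refine ⟨hmean.trans (Real.arith_mean_le_rpow_mean _ _ _ (fun i hi => (hw i hi).le) hw' hz hp.le),
    (Real.rpow_mean_eq_iff_of_le_arith_mean _ hw hw' hz hp hmean).trans ?_⟩
  constructor
  · intro h i
    have hsum : ∑ i, (inner ℂ (f i) (g i) : ℂ) = ∑ i, (‖(inner ℂ (f i) (g i) : ℂ)‖ : ℂ) := by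
      simp [h, htrace, c, mul_div_cancel₀ _ (Nat.cast_ne_zero.mpr hN.ne' : (N : ℂ) ≠ 0)]
    rw [RCLike.eq_norm_of_sum_eq_sum_norm hsum i (mem_univ i), h i (mem_univ i)]
    rfl
  · intro h i _
    rw [h i, Complex.norm_real, Real.norm_of_nonneg (by positivity)]
end

section
/- For any n-dimensional Hilbert space H and any N ≥ n, there exists a Parseval frame F = {f_i}_{i=1}^N for H with ‖f_i‖² = n/N for all i; consequently E_1^p(F,F) = (1/N ∑_i |⟨f_i,f_i⟩|^p)^{1/p} = n/N. -/
/-!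
Harmonic frames. Normalised, the first `n` columns of the `N × N` discrete Fourier matrix are
orthonormal vectors `u₀, …, u_{n-1}` in `ℂ^N`. Sending an orthonormal basis `b` of `H` to them
defines an isometry `T : H → ℂ^N`, and the vectors `f_j = T* e_j` form a Parseval frame. Since
every Fourier entry has modulus `1 / √N`, each `‖f_j‖² = ∑_k |u_k j|²` equals `n / N`. Then all
the terms `|⟨f_j, f_j⟩|^p` are equal, so their `p`-mean is `n / N`.
-/

open Finset ComplexConjugate

namespace Orthonormal
variable {𝕜 E ι : Type*} [RCLike 𝕜] [NormedAddCommGroup E] [InnerProductSpace 𝕜 E]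

theorem norm_sum_smul_sq {v : ι → E} (hv : Orthonormal 𝕜 v) (c : ι → 𝕜) (s : Finset ι) :
    ‖∑ i ∈ s, c i • v i‖ ^ 2 = ∑ i ∈ s, ‖c i‖ ^ 2 := by
  rw [← inner_self_eq_norm_sq (𝕜 := 𝕜), hv.inner_sum, map_sum]
  simp only [RCLike.conj_mul]
  norm_cast

end Orthonormal

namespace OrthonormalBasis
variable {𝕜 E ι κ : Type*} [RCLike 𝕜] [NormedAddCommGroup E] [InnerProductSpace 𝕜 E]
  [Fintype ι] (b : OrthonormalBasis ι 𝕜 E) (u : ι → EuclideanSpace 𝕜 κ)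

/-- `f j = T* e j` for the map `T v = ∑ k, ⟪b k, v⟫ • u k`, an isometry when `u` is orthonormal. -/
noncomputable def frameOf (j : κ) : E := ∑ k, conj (u k j) • b k

theorem inner_frameOf_left (j : κ) (v : E) :
    inner 𝕜 (b.frameOf u j) v = (∑ k, b.repr v k • u k) j := by
  simp [frameOf, sum_inner, inner_smul_left, b.repr_apply_apply, mul_comm]

theorem sum_norm_inner_frameOf_sq [Fintype κ] (hu : Orthonormal 𝕜 u) (v : E) :
    ∑ j, ‖inner 𝕜 (b.frameOf u j) v‖ ^ 2 = ‖v‖ ^ 2 := by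
  simp only [inner_frameOf_left]
  rw [← EuclideanSpace.norm_sq_eq, hu.norm_sum_smul_sq, ← EuclideanSpace.norm_sq_eq,
    b.repr.norm_map]

theorem norm_frameOf_sq (j : κ) : ‖b.frameOf u j‖ ^ 2 = ∑ k, ‖u k j‖ ^ 2 := by
  simp [frameOf, b.orthonormal.norm_sum_smul_sq]

end OrthonormalBasis

namespace ZMod
variable (N : ℕ) [NeZero N]

noncomputable def fourierVector (k : ZMod N) : EuclideanSpace ℂ (ZMod N) :=
  WithLp.toLp 2 fun x => ((√N : ℝ) : ℂ)⁻¹ * stdAddChar (k * x)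

theorem norm_fourierVector_apply_sq (k x : ZMod N) : ‖fourierVector N k x‖ ^ 2 = (N : ℝ)⁻¹ := by
  simp [fourierVector, stdAddChar_apply, Circle.norm_coe]

theorem conj_stdAddChar (x : ZMod N) : conj (stdAddChar x) = stdAddChar (-x) := by
  simp [stdAddChar_apply, ← Circle.coe_inv_eq_conj, AddChar.map_neg_eq_inv]

theorem orthonormal_fourierVector : Orthonormal ℂ (fourierVector N) := by
  rw [orthonormal_iff_ite]
  intro k l
  have hsum : ∑ x : ZMod N, stdAddChar (x * (l - k)) = if k = l then (N : ℂ) else 0 := by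
    simp [AddChar.sum_mulShift _ (isPrimitive_stdAddChar N), sub_eq_zero, eq_comm]
  simp only [fourierVector, PiLp.inner_apply, RCLike.inner_apply, map_mul, conj_stdAddChar]
  have hterm : ∀ x : ZMod N, ((√N : ℝ) : ℂ)⁻¹ * stdAddChar (l * x) *
      (conj ((√N : ℝ) : ℂ)⁻¹ * stdAddChar (-(k * x))) = (N : ℂ)⁻¹ * stdAddChar (x * (l - k)) := by
    intro x
    have hN : ((√N : ℝ) : ℂ) * ((√N : ℝ) : ℂ) = N := by
      rw [← Complex.ofReal_mul, Real.mul_self_sqrt N.cast_nonneg, Complex.ofReal_natCast]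
    rw [map_inv₀, Complex.conj_ofReal, show x * (l - k) = l * x + -(k * x) by ring,
      AddChar.map_add_eq_mul, ← hN, mul_inv]
    ring
  simp only [hterm, ← mul_sum, hsum]
  split_ifs <;> simp [NeZero.ne]

end ZMod

theorem Real.mean_const_rpow_one_div {N : ℕ} (hN : N ≠ 0) {c p : ℝ} (hc : 0 ≤ c) (hp : p ≠ 0) :
    ((1 / N : ℝ) * ∑ _i : Fin N, c ^ p) ^ (1 / p) = c := by
  rw [sum_const, card_univ, Fintype.card_fin, nsmul_eq_mul, one_div, inv_mul_cancel_left₀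
    (Nat.cast_ne_zero.mpr hN), ← Real.rpow_mul hc, mul_one_div_cancel hp, Real.rpow_one]

theorem stmt9 (n N : ℕ) (hN : 0 < N) (hnN : n ≤ N) (H : Type*) [NormedAddCommGroup H]
    [InnerProductSpace ℂ H] [FiniteDimensional ℂ H] (hn : Module.finrank ℂ H = n)
    (p : ℝ) (hp : 1 < p) :
    ∃ f : Fin N → H,
      (∀ v : H, ∑ i, ‖(inner ℂ (f i) v : ℂ)‖ ^ 2 = ‖v‖ ^ 2) ∧
      (∀ i, ‖f i‖ ^ 2 = (n : ℝ) / N) ∧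
      ((1 / N : ℝ) * ∑ i, ‖(inner ℂ (f i) (f i) : ℂ)‖ ^ p) ^ (1 / p) = (n : ℝ) / N := by
  have : NeZero N := ⟨hN.ne'⟩
  let e := (ZMod.finEquiv N).toEquiv
  let b := (stdOrthonormalBasis ℂ H).reindex (finCongr hn)
  let u := ZMod.fourierVector N ∘ e ∘ Fin.castLE hnN
  have hu : Orthonormal ℂ u :=
    (ZMod.orthonormal_fourierVector N).comp _ (e.injective.comp (Fin.castLE_injective hnN))
  have hnorm (i : Fin N) : ‖b.frameOf u (e i)‖ ^ 2 = n / N := by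
    simp [b.norm_frameOf_sq, u, ZMod.norm_fourierVector_apply_sq, div_eq_mul_inv]
  refine ⟨fun i => b.frameOf u (e i), fun v => ?_, hnorm, ?_⟩
  · exact (e.sum_comp fun j => ‖inner ℂ (b.frameOf u j) v‖ ^ 2).trans
      (b.sum_norm_inner_frameOf_sq u hu v)
  · simp only [← inner_self_re_eq_norm, inner_self_eq_norm_sq, hnorm]
    exact Real.mean_const_rpow_one_div hN.ne' (by positivity) (by linarith)
end

section
/- For any (N,n) dual pair (F,G) in an n-dimensional Hilbert space and p > 1, the 1-erasure operator-norm error measure O_1^p(F,G) = (1/N ∑_{i=1}^N (‖f_i‖·‖g_i‖)^p)^{1/p} satisfies O_1^p(F,G) ≥ n/N. -/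
/-!
Reading the reconstruction formula as `∑ i, rankOne (g i) (f i) = id` and taking traces gives
`∑ i, ⟪f i, g i⟫ = n`, so by Cauchy–Schwarz the rank-one error norms `‖f i‖ * ‖g i‖` sum to at
least `n`. Their arithmetic mean is therefore at least `n / N`, and the `p`-power mean dominates
the arithmetic mean.
-/

open Finset InnerProductSpace Module

namespace Real

theorem mean_le_rpow_mean {ι : Type*} (s : Finset ι) (z : ι → ℝ) (hz : ∀ i ∈ s, 0 ≤ z i)
    {p : ℝ} (hp : 1 ≤ p) :
    (1 / #s : ℝ) * ∑ i ∈ s, z i ≤ ((1 / #s : ℝ) * ∑ i ∈ s, z i ^ p) ^ (1 / p) := by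
  rcases s.eq_empty_or_nonempty with rfl | hs
  · simpa using rpow_nonneg (le_refl 0) p⁻¹
  have hw : ∑ _i ∈ s, (1 / #s : ℝ) = 1 := by
    rw [sum_const, nsmul_eq_mul, mul_one_div_cancel (by exact_mod_cast hs.card_ne_zero)]
  simpa only [mul_sum] using
    arith_mean_le_rpow_mean s (fun _ ↦ 1 / #s) z (fun _ _ ↦ by positivity) hw hz hp

end Real

section DualPair

variable {𝕜 E ι : Type*} [RCLike 𝕜] [NormedAddCommGroup E] [InnerProductSpace 𝕜 E] [Fintype ι]
  {f g : ι → E}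

theorem sum_rankOne_eq_id_of_reconstruction (hdual : ∀ v : E, v = ∑ i, inner 𝕜 (f i) v • g i) :
    ∑ i, rankOne 𝕜 (g i) (f i) = ContinuousLinearMap.id 𝕜 E := by
  ext v
  simpa using (hdual v).symm

theorem sum_inner_eq_finrank_of_reconstruction_s12 [FiniteDimensional 𝕜 E]
    (hdual : ∀ v : E, v = ∑ i, inner 𝕜 (f i) v • g i) :
    ∑ i, inner 𝕜 (f i) (g i) = (finrank 𝕜 E : 𝕜) := by
  have htrace := congrArg (fun T : E →L[𝕜] E ↦ LinearMap.trace 𝕜 E T)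
    (sum_rankOne_eq_id_of_reconstruction hdual)
  simpa [ContinuousLinearMap.toLinearMap_sum, map_sum, trace_rankOne] using htrace

theorem finrank_le_sum_norm_mul_norm_of_reconstruction [FiniteDimensional 𝕜 E]
    (hdual : ∀ v : E, v = ∑ i, inner 𝕜 (f i) v • g i) :
    (finrank 𝕜 E : ℝ) ≤ ∑ i, ‖f i‖ * ‖g i‖ := by
  calc (finrank 𝕜 E : ℝ) = RCLike.re (∑ i, inner 𝕜 (f i) (g i)) := by
        rw [sum_inner_eq_finrank_of_reconstruction_s12 hdual, RCLike.natCast_re]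
    _ = ∑ i, RCLike.re (inner 𝕜 (f i) (g i)) := map_sum _ _ _
    _ ≤ ∑ i, ‖f i‖ * ‖g i‖ := sum_le_sum fun i _ ↦
        (RCLike.re_le_norm _).trans (norm_inner_le_norm _ _)

end DualPair

theorem stmt12_general (n N : ℕ) (H : Type*) [NormedAddCommGroup H]
    [InnerProductSpace ℂ H] [FiniteDimensional ℂ H] (hn : Module.finrank ℂ H = n)
    (f g : Fin N → H)
    (hdual : ∀ v : H, v = ∑ i, (inner ℂ (f i) v : ℂ) • g i)
    (p : ℝ) (hp : 1 < p) :
    ((1 / N : ℝ) * ∑ i, (‖f i‖ * ‖g i‖) ^ p) ^ (1 / p) ≥ (n : ℝ) / N := by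
  have hsum : (n : ℝ) ≤ ∑ i, ‖f i‖ * ‖g i‖ :=
    hn ▸ finrank_le_sum_norm_mul_norm_of_reconstruction hdual
  have hmean := Real.mean_le_rpow_mean univ (fun i ↦ ‖f i‖ * ‖g i‖)
    (fun i _ ↦ by positivity) hp.le
  rw [card_univ, Fintype.card_fin] at hmean
  calc (n : ℝ) / N = (1 / N : ℝ) * n := by rw [one_div_mul_eq_div]
    _ ≤ (1 / N : ℝ) * ∑ i, ‖f i‖ * ‖g i‖ := by gcongr
    _ ≤ _ := hmean

theorem stmt12 (n N : ℕ) (hN : 0 < N) (H : Type*) [NormedAddCommGroup H]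
    [InnerProductSpace ℂ H] [FiniteDimensional ℂ H] (hn : Module.finrank ℂ H = n)
    (f g : Fin N → H)
    (hdual : ∀ v : H, v = ∑ i, (inner ℂ (f i) v : ℂ) • g i)
    (p : ℝ) (hp : 1 < p) :
    ((1 / N : ℝ) * ∑ i, (‖f i‖ * ‖g i‖) ^ p) ^ (1 / p) ≥ (n : ℝ) / N :=
  stmt12_general n N H hn f g hdual p hp
end

section
/- Let (F,G) be an (N,n) dual pair with (1/N ∑_{i=1}^N (‖f_i‖·‖g_i‖)^p)^{1/p} = n/N for some p > 1. Then ⟨f_i, g_i⟩ = n/N for all i (so (F,G) is 1-uniform), and moreover ‖f_i‖·‖g_i‖ = n/N for all i. -/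
/-!
Since `v = ∑ ⟪f i, v⟫ • g i`, the identity of `H` is `∑ ⟪f i, ·⟫ • g i`, and taking traces gives
`∑ ⟪f i, g i⟫ = n`. So the products `‖f i‖ * ‖g i‖ ≥ re ⟪f i, g i⟫` have arithmetic mean at least
`n / N`, while their `p`-power mean is `n / N`; the equality case of the power mean inequality
(strict convexity of `t ↦ t ^ p`) makes them all equal to `n / N`. Then `re ⟪f i, g i⟫ ≤ n / N`
with total `n` forces equality, and `‖⟪f i, g i⟫‖ ≤ n / N = re ⟪f i, g i⟫` makes the inner
product real.
-/

open Finset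

theorem sum_inner_eq_finrank_of_dual {𝕜 E ι : Type*} [RCLike 𝕜] [NormedAddCommGroup E]
    [InnerProductSpace 𝕜 E] [FiniteDimensional 𝕜 E] [Fintype ι] {f g : ι → E}
    (hdual : ∀ v : E, v = ∑ i, (inner 𝕜 (f i) v : 𝕜) • g i) :
    ∑ i, (inner 𝕜 (f i) (g i) : 𝕜) = Module.finrank 𝕜 E := by
  have hid : (LinearMap.id : E →ₗ[𝕜] E) =
      ∑ i, ((innerSL 𝕜 (f i) : E →L[𝕜] 𝕜) : E →ₗ[𝕜] 𝕜).smulRight (g i) := by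
    ext v
    simpa using hdual v
  simpa using congrArg (LinearMap.trace 𝕜 E) hid.symm

theorem Real.eq_of_rpow_mean_le_of_le_arith_mean {ι : Type*} [Fintype ι] {w x : ι → ℝ}
    {p c : ℝ} (hp : 1 < p) (hw : ∀ i, 0 < w i) (hw1 : ∑ i, w i = 1) (hx : ∀ i, 0 ≤ x i)
    (hpow : (∑ i, w i * x i ^ p) ^ (1 / p) ≤ c) (hmean : c ≤ ∑ i, w i * x i) :
    ∀ j, x j = c := by
  set m := ∑ i, w i * x i
  have hmM : m ≤ (∑ i, w i * x i ^ p) ^ (1 / p) :=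
    Real.arith_mean_le_rpow_mean univ w x (fun i _ => (hw i).le) hw1 (fun i _ => hx i) hp.le
  have hm : m = c := le_antisymm (hmM.trans hpow) hmean
  have hjensen : m ^ p = ∑ i, w i * x i ^ p := by
    refine ((Real.rpow_inv_eq
      (sum_nonneg fun i _ => mul_nonneg (hw i).le (Real.rpow_nonneg (hx i) p))
      (sum_nonneg fun i _ => mul_nonneg (hw i).le (hx i)) (by positivity)).1 ?_).symm
    rw [← one_div]
    exact le_antisymm (hpow.trans hm.ge) hmM
  have hconst := ((strictConvexOn_rpow hp).map_sum_eq_iff_of_pos (fun i _ => hw i) hw1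
    (fun i _ => Set.mem_Ici.2 (hx i))).1 (by simpa only [smul_eq_mul] using hjensen)
  intro j
  rw [← hm]
  calc x j = ∑ i, w i * x j := by rw [← sum_mul, hw1, one_mul]
    _ = m := sum_congr rfl fun i _ => by rw [hconst (mem_univ i) (mem_univ j)]

theorem Complex.eq_ofReal_of_norm_le_of_le_re {z : ℂ} {c : ℝ} (hnorm : ‖z‖ ≤ c)
    (hre : c ≤ z.re) : z = c := by
  have hre_eq : z.re = c := le_antisymm (z.re_le_norm.trans hnorm) hre
  have him : z.im = 0 := Complex.abs_re_eq_norm.1 <|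
    le_antisymm (Complex.abs_re_le_norm z) (hnorm.trans (hre.trans (le_abs_self _)))
  exact Complex.ext (by simpa using hre_eq) (by simpa using him)

theorem stmt13_general (n N : ℕ) (H : Type*) [NormedAddCommGroup H]
    [InnerProductSpace ℂ H] [FiniteDimensional ℂ H] (hn : Module.finrank ℂ H = n)
    (f g : Fin N → H)
    (hdual : ∀ v : H, v = ∑ i, (inner ℂ (f i) v : ℂ) • g i)
    (p : ℝ) (hp : 1 < p)
    (hopt : ((1 / N : ℝ) * ∑ i, (‖f i‖ * ‖g i‖) ^ p) ^ (1 / p) = (n : ℝ) / N) :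
    ∀ i, (inner ℂ (f i) (g i) : ℂ) = ((n : ℝ) / N : ℝ) ∧ ‖f i‖ * ‖g i‖ = (n : ℝ) / N := by
  intro i
  have hN : (N : ℝ) ≠ 0 := Nat.cast_ne_zero.2 (Fin.pos i).ne'
  have htrace : ∑ j, (inner ℂ (f j) (g j)).re = n := by
    simpa [hn] using congrArg Complex.re (sum_inner_eq_finrank_of_dual hdual)
  have hre_le : ∀ j, (inner ℂ (f j) (g j)).re ≤ ‖f j‖ * ‖g j‖ := fun j =>
    (Complex.re_le_norm _).trans (norm_inner_le_norm _ _)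
  have hnorm : ∀ j, ‖f j‖ * ‖g j‖ = n / N :=
    Real.eq_of_rpow_mean_le_of_le_arith_mean (w := fun _ => 1 / N) hp (fun _ => by positivity)
      (by simp [hN]) (fun _ => by positivity) (by rw [← mul_sum]; exact hopt.le)
      (by rw [← mul_sum, ← htrace, one_div_mul_eq_div]; gcongr with j; exact hre_le j)
  have hre : ∀ j, (inner ℂ (f j) (g j)).re = ‖f j‖ * ‖g j‖ := fun j =>
    (sum_eq_sum_iff_of_le fun j _ => hre_le j).1
      (by simp [hnorm, htrace, mul_div_cancel₀ _ hN]) j (mem_univ j)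
  exact ⟨Complex.eq_ofReal_of_norm_le_of_le_re ((norm_inner_le_norm _ _).trans (hnorm i).le)
    ((hnorm i).ge.trans (hre i).ge), hnorm i⟩

theorem stmt13 (n N : ℕ) (hN : 0 < N) (H : Type*) [NormedAddCommGroup H]
    [InnerProductSpace ℂ H] [FiniteDimensional ℂ H] (hn : Module.finrank ℂ H = n)
    (f g : Fin N → H)
    (hdual : ∀ v : H, v = ∑ i, (inner ℂ (f i) v : ℂ) • g i)
    (p : ℝ) (hp : 1 < p)
    (hopt : ((1 / N : ℝ) * ∑ i, (‖f i‖ * ‖g i‖) ^ p) ^ (1 / p) = (n : ℝ) / N) :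
    ∀ i, (inner ℂ (f i) (g i) : ℂ) = ((n : ℝ) / N : ℝ) ∧ ‖f i‖ * ‖g i‖ = (n : ℝ) / N :=
  stmt13_general n N H hn f g hdual p hp hopt
end

section
/- Let Γ be a connected graph on N vertices and F = {f_i}_{i=1}^N a frame for ℂ^{N-1} whose Gramian matrix Θ_F Θ_F* equals the Laplacian L(Γ). If c_1,...,c_N ∈ ℂ with c_1 ≠ 0 satisfy ∑_i c_i f_i = 0, then every dual frame of F has the form {S_F^{-1} f_i + (c_i/c_1)·h}_{i=1}^N for some h ∈ ℂ^{N-1}. -/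
/-! Pairing the relation `∑ cᵢ fᵢ = 0` with each `f_k` gives `L c = 0` (the Gramian is `L`), so
`c` is constant on the connected graph and `∑ fᵢ = 0`. The analysis operator `Θ` is injective,
since a dual frame reconstructs `v` from `Θ v`; hence its range is an `(N-1)`-dimensional subspace
of the sum-zero vectors in `ℂᴺ`, i.e. all of them. Two dual frames `g, g'` satisfy
`∑ aᵢ (gᵢ - g'ᵢ) = 0` for every `a` in that range, and `a = e_i - e_j` shows that `gᵢ - g'ᵢ`
does not depend on `i`. Take `g' = S⁻¹ f`, the canonical dual; here `cᵢ / c₁ = 1`. -/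

open Finset Matrix Module

namespace SimpleGraph

variable {V : Type*} [Fintype V] [DecidableEq V] {G : SimpleGraph V} [DecidableRel G.Adj]

theorem lapMatrix_map {R S : Type*} [Ring R] [Ring S] (φ : R →+* S) :
    (G.lapMatrix R).map φ = G.lapMatrix S := by
  ext i j
  by_cases hij : i = j <;> by_cases hadj : G.Adj i j <;>
    simp [lapMatrix, degMatrix, adjMatrix_apply, hij, hadj]

theorem comp_lapMatrix_mulVec {R S : Type*} [Ring R] [Ring S] (φ : R →+ S) (x : V → R) :
    φ ∘ (G.lapMatrix R *ᵥ x) = G.lapMatrix S *ᵥ (φ ∘ x) := by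
  funext v
  simp [lapMatrix_mulVec_apply, ← nsmul_eq_mul, map_sum]

theorem Connected.eq_of_lapMatrix_mulVec_eq_zero {𝕜 : Type*} [RCLike 𝕜] (hG : G.Connected)
    {x : V → 𝕜} (hx : G.lapMatrix 𝕜 *ᵥ x = 0) (i j : V) : x i = x j := by
  have hφ (φ : 𝕜 →+ ℝ) : φ (x i) = φ (x j) := by
    have : G.lapMatrix ℝ *ᵥ (φ ∘ x) = 0 := by
      rw [← comp_lapMatrix_mulVec, hx]
      funext v
      simp
    exact (G.lapMatrix_mulVec_eq_zero_iff_forall_reachable).mp this i j (hG i j)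
  exact RCLike.ext (hφ RCLike.re) (hφ RCLike.im)

end SimpleGraph

theorem Matrix.gram_mulVec_eq_zero_of_sum_smul_eq_zero {𝕜 E ι : Type*} [RCLike 𝕜]
    [NormedAddCommGroup E] [InnerProductSpace 𝕜 E] [Fintype ι] {v : ι → E} {c : ι → 𝕜}
    (hc : ∑ i, c i • v i = 0) : gram 𝕜 v *ᵥ c = 0 := by
  funext k
  have := congrArg (inner 𝕜 (v k)) hc
  simp only [inner_sum, inner_smul_right, inner_zero_right] at this
  simpa [mulVec, dotProduct, gram_apply, mul_comm] using this

section DualFrame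

variable {𝕜 E ι : Type*} [RCLike 𝕜] [NormedAddCommGroup E] [InnerProductSpace 𝕜 E]

variable (𝕜) in
def analysisOp (f : ι → E) : E →ₗ[𝕜] ι → 𝕜 :=
  LinearMap.pi fun i => innerₛₗ 𝕜 (f i)

@[simp]
theorem analysisOp_apply (f : ι → E) (v : E) (i : ι) :
    analysisOp 𝕜 f v i = inner 𝕜 (f i) v :=
  rfl

variable [Fintype ι]

variable (𝕜) in
def IsDualFrame (f g : ι → E) : Prop :=
  ∀ v, ∑ i, inner 𝕜 (f i) v • g i = v

theorem isDualFrame_symm_comp {f : ι → E} (S : E ≃ₗ[𝕜] E)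
    (hS : ∀ v, S v = ∑ i, inner 𝕜 (f i) v • f i) : IsDualFrame 𝕜 f (S.symm ∘ f) := by
  intro v
  simp only [Function.comp_apply, ← map_smul, ← map_sum, ← hS, LinearEquiv.symm_apply_apply]

namespace IsDualFrame

variable {f g g' : ι → E}

theorem injective_analysisOp (hg : IsDualFrame 𝕜 f g) :
    Function.Injective (analysisOp 𝕜 f) := by
  refine (injective_iff_map_eq_zero _).mpr fun v hv => ?_
  rw [← hg v]
  exact sum_eq_zero fun i _ => by rw [← analysisOp_apply, hv, Pi.zero_apply, zero_smul]

theorem sum_smul_sub_eq_zero (hg : IsDualFrame 𝕜 f g) (hg' : IsDualFrame 𝕜 f g')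
    {a : ι → 𝕜} (ha : a ∈ LinearMap.range (analysisOp 𝕜 f)) :
    ∑ i, a i • (g i - g' i) = 0 := by
  obtain ⟨v, rfl⟩ := ha
  simp [smul_sub, sum_sub_distrib, hg v, hg' v]

end IsDualFrame

theorem range_analysisOp_eq_ker_sum [FiniteDimensional 𝕜 E] {f : ι → E}
    (hdim : finrank 𝕜 E + 1 = Fintype.card ι) (hf : Function.Injective (analysisOp 𝕜 f))
    (hsum : ∑ i, f i = 0) :
    LinearMap.range (analysisOp 𝕜 f) =
      LinearMap.ker (∑ i, LinearMap.proj i : (ι → 𝕜) →ₗ[𝕜] 𝕜) := by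
  set σ : (ι → 𝕜) →ₗ[𝕜] 𝕜 := ∑ i, LinearMap.proj i
  have hσ (a : ι → 𝕜) : σ a = ∑ i, a i := by simp [σ]
  have hle : LinearMap.range (analysisOp 𝕜 f) ≤ LinearMap.ker σ := by
    rintro _ ⟨v, rfl⟩
    rw [LinearMap.mem_ker, hσ]
    simp [← sum_inner, hsum]
  have hσ_surj : LinearMap.range σ = ⊤ := by
    classical
    obtain ⟨i⟩ : Nonempty ι := Fintype.card_pos_iff.mp (by omega)
    refine LinearMap.range_eq_top.mpr fun z => ⟨Pi.single i z, ?_⟩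
    simp [hσ]
  refine Submodule.eq_of_le_of_finrank_eq hle ?_
  have := σ.finrank_range_add_finrank_ker
  rw [hσ_surj, finrank_top, finrank_self, finrank_fintype_fun_eq_card] at this
  rw [LinearMap.finrank_range_of_inj hf]
  omega

theorem IsDualFrame.exists_eq_add_const [FiniteDimensional 𝕜 E] {f g g' : ι → E}
    (hdim : finrank 𝕜 E + 1 = Fintype.card ι) (hsum : ∑ i, f i = 0)
    (hg : IsDualFrame 𝕜 f g) (hg' : IsDualFrame 𝕜 f g') : ∃ h, ∀ i, g i = g' i + h := by
  classical
  obtain ⟨i₀⟩ : Nonempty ι := Fintype.card_pos_iff.mp (by omega)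
  refine ⟨g i₀ - g' i₀, fun i => ?_⟩
  have hmem : Pi.single i 1 - Pi.single i₀ 1 ∈ LinearMap.range (analysisOp 𝕜 f) := by
    rw [range_analysisOp_eq_ker_sum hdim hg.injective_analysisOp hsum]
    simp
  have := hg.sum_smul_sub_eq_zero hg' hmem
  simp only [Pi.sub_apply, sub_smul, sum_sub_distrib, Pi.single_apply, ite_smul, one_smul,
    zero_smul, sum_ite_eq', mem_univ, if_true] at this
  rw [← sub_eq_zero, ← this]
  abel

end DualFrame

theorem stmt18 (N : ℕ) (hN : 0 < N) (G : SimpleGraph (Fin N)) [DecidableRel G.Adj]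
    (hconn : G.Connected)
    (f : Fin N → EuclideanSpace ℂ (Fin (N - 1)))
    (hGram : ∀ k l, (inner ℂ (f k) (f l) : ℂ) = ((G.lapMatrix ℝ k l : ℝ) : ℂ))
    (S : EuclideanSpace ℂ (Fin (N - 1)) ≃ₗ[ℂ] EuclideanSpace ℂ (Fin (N - 1)))
    (hS : ∀ v, S v = ∑ i, (inner ℂ (f i) v : ℂ) • f i)
    (c : Fin N → ℂ) (hc0 : c ⟨0, by omega⟩ ≠ 0) (hrel : ∑ i, c i • f i = 0)
    (g : Fin N → EuclideanSpace ℂ (Fin (N - 1)))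
    (hdual : ∀ v, v = ∑ i, (inner ℂ (f i) v : ℂ) • g i) :
    ∃ h : EuclideanSpace ℂ (Fin (N - 1)),
      ∀ i, g i = S.symm (f i) + (c i / c ⟨0, by omega⟩) • h := by
  set i₀ : Fin N := ⟨0, by omega⟩
  have hgram : gram ℂ f = G.lapMatrix ℂ := by
    rw [← G.lapMatrix_map Complex.ofRealHom]
    ext k l
    exact hGram k l
  have hLc : G.lapMatrix ℂ *ᵥ c = 0 := hgram ▸ gram_mulVec_eq_zero_of_sum_smul_eq_zero hrel
  have hconst (i : Fin N) : c i = c i₀ := hconn.eq_of_lapMatrix_mulVec_eq_zero hLc i i₀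
  have hsum : ∑ i, f i = 0 := by
    refine (smul_eq_zero.mp ?_).resolve_left hc0
    rw [smul_sum, ← hrel]
    exact sum_congr rfl fun i _ => by rw [hconst i]
  obtain ⟨h, hh⟩ := IsDualFrame.exists_eq_add_const (by simp; omega) hsum
    (fun v => (hdual v).symm) (isDualFrame_symm_comp S hS)
  refine ⟨h, fun i => ?_⟩
  rw [hh i, hconst i, div_self hc0, one_smul]
  rfl
end
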